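/- arXiv:2102.01791 — 3 statements merged into one kernel-verified Lean document; each statement's English description precedes it below -/
import Mathlib

section
/- Let γ : ℝ → ℝ³ be 1-periodic, twice continuously differentiable, arclength-parameterized (‖γ'(s)‖ = 1 for all s), and satisfy the chord-arc condition: there exists c > 0 with ‖γ(s) − γ(t)‖ ≥ c·|sin(π(s−t))| for all s, t ∈ ℝ. Let f : ℝ → ℝ³ be 1-periodic and Lipschitz continuous. Then there exists M > 0 such that for all s, t ∈ ℝ with s − t ∉ ℤ, writing r = γ(s) − γ(t) and e = γ'(s), one has ‖ f(t)/‖r‖ + (⟨r, f(t)⟩/‖r‖³)·r − (π/|sin(π(s−t))|)·( f(s) + ⟨e, f(s)⟩·e ) ‖ ≤ M. (That is, the two individually divergent terms in the Keller–Rubinow slender-body integrand cancel to give a bounded integrand.) -/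
/-!
Write `u = s - t`, shifted by an integer so that `0 < |u| ≤ 1/2`, `r = γ s - γ t` and
`e = γ' s`. The Stokeslet `x ↦ I/‖x‖ + x xᵀ/‖x‖³` is homogeneous of degree `-1`, so at
`x = u e` it equals `(I + e eᵀ)/|u|`, and on `‖x‖ ≥ ρ` it is Lipschitz with constant `O(ρ⁻²)`.
Taylor's theorem gives `‖r - u e‖ ≤ L u²` and the chord-arc condition gives `‖r‖ ≥ 2c|u|`, so
replacing `r` by `u e` costs `O(1)`, as does replacing `f t` by `f s`. What remains is
`(1/|u| - π/|sin πu|)(I + e eᵀ) f s`, bounded since `x - sin x = O(x³)`.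
-/

open Real Function
open scoped RealInnerProductSpace NNReal

theorem abs_inv_sin_sub_inv_le {x : ℝ} (hx : 0 < x) (hxπ : x ≤ π / 2) :
    |(sin x)⁻¹ - x⁻¹| ≤ π * x / 12 := by
  have hjordan := mul_le_sin hx.le hxπ
  have hsin : 0 < sin x := lt_of_lt_of_le (by positivity) hjordan
  have hcube := sin_ge_sub_cube hx.le
  have hsub : (sin x)⁻¹ - x⁻¹ = (x - sin x) / (x * sin x) := by field_simp
  rw [hsub, abs_of_nonneg (div_nonneg (sub_nonneg.2 (sin_le hx.le)) (by positivity)),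
    div_le_div_iff₀ (by positivity) (by norm_num)]
  have : 2 * x ≤ π * sin x := by
    rwa [div_mul_eq_mul_div, div_le_iff₀ pi_pos, mul_comm (sin x)] at hjordan
  nlinarith [hcube, mul_le_mul_of_nonneg_left this (sq_nonneg x)]

theorem abs_sin_pi_mul_eq {u : ℝ} (hu : |u| ≤ 1) : |sin (π * u)| = sin (π * |u|) := by
  have hπu : |π * u| ≤ π := by
    rw [abs_mul, abs_of_pos pi_pos]
    exact mul_le_of_le_one_right pi_pos.le hu
  rw [abs_sin_eq_sin_abs_of_abs_le_pi hπu, abs_mul, abs_of_pos pi_pos]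

theorem two_mul_abs_le_abs_sin_pi_mul {u : ℝ} (hu : |u| ≤ 1 / 2) :
    2 * |u| ≤ |sin (π * u)| := by
  rw [abs_sin_pi_mul_eq (hu.trans (by norm_num))]
  convert mul_le_sin (x := π * |u|) (by positivity) (by nlinarith [pi_pos]) using 1
  field_simp

theorem abs_pi_div_abs_sin_sub_inv_le {u : ℝ} (hu : u ≠ 0) (hu' : |u| ≤ 1 / 2) :
    |π / |sin (π * u)| - |u|⁻¹| ≤ π ^ 3 / 24 := by
  have hx : 0 < π * |u| := by positivity
  have hinv := abs_inv_sin_sub_inv_le hx (by nlinarith [pi_pos])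
  rw [abs_sin_pi_mul_eq (hu'.trans (by norm_num))]
  have hfactor : π / sin (π * |u|) - |u|⁻¹ = π * ((sin (π * |u|))⁻¹ - (π * |u|)⁻¹) := by
    field_simp
  calc |π / sin (π * |u|) - |u|⁻¹| = π * |(sin (π * |u|))⁻¹ - (π * |u|)⁻¹| := by
        rw [hfactor, abs_mul, abs_of_pos pi_pos]
    _ ≤ π * (π * (π * |u|) / 12) := by gcongr
    _ ≤ π ^ 3 / 24 := by nlinarith [pi_pos, pow_pos pi_pos 3]

section Calculus

variable {V : Type*} [NormedAddCommGroup V] [NormedSpace ℝ V]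

theorem Function.Periodic.deriv {g : ℝ → V} {c : ℝ} (hg : Periodic g c) :
    Periodic (deriv g) c := fun x => by
  rw [← deriv_comp_add_const, hg.funext]

theorem Function.Periodic.exists_lipschitzWith {g : ℝ → V} {c : ℝ} (hg : Periodic g c)
    (hc : c ≠ 0) (hg₁ : ContDiff ℝ 1 g) : ∃ L, LipschitzWith L g := by
  obtain ⟨L, hL⟩ := ((hg.deriv.comp (‖·‖₊)).compact_of_continuous hc
    (hg₁.continuous_deriv le_rfl).nnnorm).bddAbove
  exact ⟨L, lipschitzWith_of_nnnorm_deriv_le (hg₁.differentiable one_ne_zero)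
    fun x => hL ⟨x, rfl⟩⟩

theorem norm_sub_sub_smul_deriv_le {γ : ℝ → V} {L : ℝ≥0} (hγ : Differentiable ℝ γ)
    (hγ' : LipschitzWith L (deriv γ)) (s t : ℝ) :
    ‖γ s - γ t - (s - t) • deriv γ s‖ ≤ L * (s - t) ^ 2 := by
  have hderiv (v : ℝ) :
      HasDerivAt (fun v => γ v - v • deriv γ s) (deriv γ v - deriv γ s) v := by
    have h := (hγ v).hasDerivAt.sub ((hasDerivAt_id' v).smul_const (deriv γ s))
    rwa [one_smul] at h
  have hbound : ∀ v ∈ Set.uIcc s t, ‖deriv γ v - deriv γ s‖ ≤ L * |s - t| := fun v hv => by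
    rw [← dist_eq_norm]
    refine (hγ'.dist_le_mul v s).trans (mul_le_mul_of_nonneg_left ?_ L.coe_nonneg)
    rw [Real.dist_eq, abs_sub_comm s t]
    exact Set.abs_sub_left_of_mem_uIcc hv
  have := (convex_uIcc s t).norm_image_sub_le_of_norm_hasDerivWithin_le
    (fun v _ => (hderiv v).hasDerivWithinAt) hbound Set.left_mem_uIcc Set.right_mem_uIcc
  calc ‖γ s - γ t - (s - t) • deriv γ s‖
      = ‖(γ t - t • deriv γ s) - (γ s - s • deriv γ s)‖ := by
        rw [← norm_neg, sub_smul]; congr 1; abel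
    _ ≤ L * |s - t| * ‖t - s‖ := this
    _ = L * (s - t) ^ 2 := by
      rw [norm_sub_rev, Real.norm_eq_abs, mul_assoc, abs_mul_abs_self, sq]

end Calculus

section Stokeslet

variable {E : Type*} [NormedAddCommGroup E] [InnerProductSpace ℝ E]

noncomputable def stokeslet (x v : E) : E := ‖x‖⁻¹ • v + (⟪x, v⟫ / ‖x‖ ^ 3) • x

theorem stokeslet_sub (x v w : E) : stokeslet x (v - w) = stokeslet x v - stokeslet x w := by
  simp only [stokeslet, inner_sub_right]
  module

theorem norm_stokeslet_le (x v : E) : ‖stokeslet x v‖ ≤ 2 * ‖v‖ / ‖x‖ := by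
  rcases eq_or_ne x 0 with rfl | hx
  · simp [stokeslet]
  calc ‖stokeslet x v‖ ≤ ‖x‖⁻¹ * ‖v‖ + |⟪x, v⟫| / ‖x‖ ^ 3 * ‖x‖ := by
        refine (norm_add_le _ _).trans_eq ?_
        rw [norm_smul, norm_smul, Real.norm_eq_abs, Real.norm_eq_abs, abs_div,
          abs_inv, abs_norm, abs_pow, abs_norm]
    _ ≤ ‖x‖⁻¹ * ‖v‖ + ‖x‖ * ‖v‖ / ‖x‖ ^ 3 * ‖x‖ := by
        gcongr; exact abs_real_inner_le_norm x v
    _ = 2 * ‖v‖ / ‖x‖ := by field_simp; ring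

theorem stokeslet_smul_of_norm_eq_one {e : E} (he : ‖e‖ = 1) (u : ℝ) (v : E) :
    stokeslet (u • e) v = |u|⁻¹ • (v + ⟪e, v⟫ • e) := by
  rcases eq_or_ne u 0 with rfl | hu
  · simp [stokeslet]
  simp only [stokeslet, norm_smul, he, Real.norm_eq_abs, mul_one, real_inner_smul_left, smul_smul]
  match_scalars
  · ring
  · field_simp
    rw [pow_succ, sq_abs]
    ring

theorem norm_stokeslet_sub_stokeslet_le {x y : E} (hx : 0 < ‖x‖) (hxy : ‖x‖ ≤ ‖y‖) (v : E) :
    ‖stokeslet x v - stokeslet y v‖ ≤ 6 * ‖x - y‖ * ‖v‖ / ‖x‖ ^ 2 := by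
  set a := ‖x‖
  set b := ‖y‖
  set d := ‖x - y‖
  set N := ‖v‖
  have hb : 0 < b := hx.trans_le hxy
  have hd : b - a ≤ d := (norm_sub_norm_le y x).trans_eq (norm_sub_rev y x)
  have hsplit : stokeslet x v - stokeslet y v = (a⁻¹ - b⁻¹) • v
      + ((a ^ 3)⁻¹ - (b ^ 3)⁻¹) • (⟪x, v⟫ • x)
      + (b ^ 3)⁻¹ • (⟪x - y, v⟫ • x + ⟪y, v⟫ • (x - y)) := by
    simp only [stokeslet, inner_sub_left]
    module
  have hinv : a⁻¹ - b⁻¹ ≤ d / a ^ 2 := by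
    rw [inv_sub_inv hx.ne' hb.ne', div_le_div_iff₀ (by positivity) (by positivity)]
    nlinarith [mul_le_mul_of_nonneg_right hd (sq_nonneg a),
      mul_le_mul_of_nonneg_left hxy (mul_nonneg (sub_nonneg.2 hxy) hx.le)]
  have hinv3 : ((a ^ 3)⁻¹ - (b ^ 3)⁻¹) * a ^ 2 ≤ 3 * d / a ^ 2 := by
    have hcube : b ^ 3 - a ^ 3 ≤ 3 * b ^ 2 * d :=
      calc b ^ 3 - a ^ 3 = (b - a) * (a ^ 2 + a * b + b ^ 2) := by ring
        _ ≤ d * (b ^ 2 + b * b + b ^ 2) := by gcongr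
        _ = 3 * b ^ 2 * d := by ring
    rw [inv_sub_inv (by positivity) (by positivity), div_mul_eq_mul_div,
      div_le_div_iff₀ (by positivity) (by positivity)]
    nlinarith [mul_le_mul_of_nonneg_left hcube (by positivity : 0 ≤ a ^ 5),
      mul_le_mul_of_nonneg_left hxy (by positivity : 0 ≤ 3 * a ^ 4 * b ^ 2 * d)]
  have hT1 : ‖(a⁻¹ - b⁻¹) • v‖ ≤ d * N / a ^ 2 := by
    rw [norm_smul, Real.norm_eq_abs, abs_of_nonneg (sub_nonneg.2 (inv_anti₀ hx hxy))]
    calc (a⁻¹ - b⁻¹) * N ≤ d / a ^ 2 * N := by gcongr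
      _ = d * N / a ^ 2 := by ring
  have hT2 : ‖((a ^ 3)⁻¹ - (b ^ 3)⁻¹) • (⟪x, v⟫ • x)‖ ≤ 3 * d * N / a ^ 2 := by
    rw [norm_smul, norm_smul, Real.norm_eq_abs, Real.norm_eq_abs,
      abs_of_nonneg (sub_nonneg.2 (inv_anti₀ (by positivity) (by gcongr)))]
    calc ((a ^ 3)⁻¹ - (b ^ 3)⁻¹) * (|⟪x, v⟫| * a)
        ≤ ((a ^ 3)⁻¹ - (b ^ 3)⁻¹) * (a * N * a) := by
          gcongr
          · exact sub_nonneg.2 (inv_anti₀ (by positivity) (by gcongr))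
          · exact abs_real_inner_le_norm x v
      _ = ((a ^ 3)⁻¹ - (b ^ 3)⁻¹) * a ^ 2 * N := by ring
      _ ≤ 3 * d / a ^ 2 * N := by gcongr
      _ = 3 * d * N / a ^ 2 := by ring
  have hT3 : ‖(b ^ 3)⁻¹ • (⟪x - y, v⟫ • x + ⟪y, v⟫ • (x - y))‖ ≤ 2 * d * N / a ^ 2 := by
    have hsum : ‖⟪x - y, v⟫ • x + ⟪y, v⟫ • (x - y)‖ ≤ 2 * b * d * N := by
      refine (norm_add_le _ _).trans ?_
      rw [norm_smul, norm_smul, Real.norm_eq_abs, Real.norm_eq_abs]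
      have h₁ := abs_real_inner_le_norm (x - y) v
      have h₂ := abs_real_inner_le_norm y v
      nlinarith [mul_le_mul h₁ hxy hx.le (by positivity),
        mul_le_mul_of_nonneg_right h₂ (norm_nonneg (x - y))]
    rw [norm_smul, Real.norm_eq_abs, abs_of_pos (by positivity)]
    calc (b ^ 3)⁻¹ * ‖⟪x - y, v⟫ • x + ⟪y, v⟫ • (x - y)‖ ≤ (b ^ 3)⁻¹ * (2 * b * d * N) := by
          gcongr
      _ = 2 * d * N / b ^ 2 := by field_simp
      _ ≤ 2 * d * N / a ^ 2 := by gcongr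
  rw [hsplit]
  calc _ ≤ _ := norm_add₃_le
    _ ≤ d * N / a ^ 2 + 3 * d * N / a ^ 2 + 2 * d * N / a ^ 2 := by gcongr
    _ = 6 * d * N / a ^ 2 := by ring

theorem norm_stokeslet_sub_smul_le {r e v w : E} {u σ c K L F B : ℝ}
    (he : ‖e‖ = 1) (hu : u ≠ 0) (hc : 0 < c)
    (hr : 2 * c * |u| ≤ ‖r‖) (hr' : ‖r‖ ≤ |u|) (hrL : ‖r - u • e‖ ≤ L * u ^ 2)
    (hvw : ‖v - w‖ ≤ K * |u|) (hw : ‖w‖ ≤ F) (hσ : |σ - |u|⁻¹| ≤ B) :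
    ‖stokeslet r v - σ • (w + ⟪e, w⟫ • e)‖ ≤ K / c + 3 * L * F / (2 * c ^ 2) + 2 * B * F := by
  have hu' : 0 < |u| := abs_pos.2 hu
  have hr₀ : 0 < ‖r‖ := lt_of_lt_of_le (by positivity) hr
  have hue : ‖u • e‖ = |u| := by rw [norm_smul, he, Real.norm_eq_abs, mul_one]
  have hF : 0 ≤ F := (norm_nonneg w).trans hw
  have hsplit : stokeslet r v - σ • (w + ⟪e, w⟫ • e) = stokeslet r (v - w)
      + (stokeslet r w - stokeslet (u • e) w) + (|u|⁻¹ - σ) • (w + ⟪e, w⟫ • e) := by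
    rw [stokeslet_sub, stokeslet_smul_of_norm_eq_one he]
    module
  have hT1 : ‖stokeslet r (v - w)‖ ≤ K / c :=
    calc ‖stokeslet r (v - w)‖ ≤ 2 * ‖v - w‖ / ‖r‖ := norm_stokeslet_le r (v - w)
      _ ≤ 2 * (K * |u|) / (2 * c * |u|) := by
        have hKu : 0 ≤ K * |u| := (norm_nonneg _).trans hvw
        gcongr
      _ = K / c := by field_simp
  have hT2 : ‖stokeslet r w - stokeslet (u • e) w‖ ≤ 3 * L * F / (2 * c ^ 2) :=
    calc ‖stokeslet r w - stokeslet (u • e) w‖ ≤ 6 * ‖r - u • e‖ * ‖w‖ / ‖r‖ ^ 2 :=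
          norm_stokeslet_sub_stokeslet_le hr₀ (hr'.trans_eq hue.symm) w
      _ ≤ 6 * (L * u ^ 2) * F / (2 * c * |u|) ^ 2 := by
        have hLu : 0 ≤ L * u ^ 2 := (norm_nonneg _).trans hrL
        gcongr
      _ = 3 * L * F / (2 * c ^ 2) := by
        rw [← sq_abs u]
        field_simp
        ring
  have hT3 : ‖(|u|⁻¹ - σ) • (w + ⟪e, w⟫ • e)‖ ≤ 2 * B * F := by
    have hX : ‖w + ⟪e, w⟫ • e‖ ≤ 2 * F :=
      calc ‖w + ⟪e, w⟫ • e‖ ≤ ‖w‖ + |⟪e, w⟫| := by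
            refine (norm_add_le _ _).trans_eq ?_
            rw [norm_smul, Real.norm_eq_abs, he, mul_one]
        _ ≤ ‖w‖ + ‖w‖ := by
            gcongr
            simpa [he] using abs_real_inner_le_norm e w
        _ ≤ 2 * F := by linarith
    rw [norm_smul, Real.norm_eq_abs, abs_sub_comm]
    calc |σ - |u|⁻¹| * ‖w + ⟪e, w⟫ • e‖ ≤ B * (2 * F) := by gcongr; exact (abs_nonneg _).trans hσ
      _ = 2 * B * F := by ring
  rw [hsplit]
  calc _ ≤ _ := norm_add₃_le
    _ ≤ _ := by gcongr

noncomputable def kellerRubinowIntegrand (γ f : ℝ → E) (s t : ℝ) : E :=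
  stokeslet (γ s - γ t) (f t)
    - (π / |sin (π * (s - t))|) • (f s + ⟪deriv γ s, f s⟫ • deriv γ s)

theorem kellerRubinowIntegrand_add_int {γ f : ℝ → E} (hγ : Periodic γ 1) (hf : Periodic f 1)
    (s t : ℝ) (n : ℤ) : kellerRubinowIntegrand γ f s (t + n) = kellerRubinowIntegrand γ f s t := by
  have hsin : |sin (π * (s - (t + n)))| = |sin (π * (s - t))| := by
    rw [show π * (s - (t + n)) = π * (s - t) - n * π by ring, sin_sub_int_mul_pi]
    simp [abs_mul]
  have hγn : γ (t + n) = γ t := by simpa using hγ.int_mul n t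
  have hfn : f (t + n) = f t := by simpa using hf.int_mul n t
  rw [kellerRubinowIntegrand, kellerRubinowIntegrand, hsin, hγn, hfn]

theorem norm_kellerRubinowIntegrand_le {γ f : ℝ → E} {K L : ℝ≥0} {c F s t : ℝ}
    (hγ : Differentiable ℝ γ) (hunit : ∀ x, ‖deriv γ x‖ = 1) (hγ' : LipschitzWith L (deriv γ))
    (hc : 0 < c) (hchord : c * |sin (π * (s - t))| ≤ ‖γ s - γ t‖)
    (hf : LipschitzWith K f) (hF : ‖f s‖ ≤ F) (hst : s - t ≠ 0) (hst' : |s - t| ≤ 1 / 2) :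
    ‖kellerRubinowIntegrand γ f s t‖
      ≤ K / c + 3 * L * F / (2 * c ^ 2) + 2 * (π ^ 3 / 24) * F := by
  refine norm_stokeslet_sub_smul_le (hunit s) hst hc ?_ ?_
    (norm_sub_sub_smul_deriv_le hγ hγ' s t) ?_ hF (abs_pi_div_abs_sin_sub_inv_le hst hst')
  · calc 2 * c * |s - t| = c * (2 * |s - t|) := by ring
      _ ≤ c * |sin (π * (s - t))| := by gcongr; exact two_mul_abs_le_abs_sin_pi_mul hst'
      _ ≤ ‖γ s - γ t‖ := hchord
  · simpa using convex_univ.norm_image_sub_le_of_norm_deriv_le (fun x _ => hγ x)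
      (fun x _ => (hunit x).le) (Set.mem_univ t) (Set.mem_univ s)
  · simpa [dist_eq_norm, Real.dist_eq, abs_sub_comm] using hf.dist_le_mul t s

end Stokeslet

/-- The two individually divergent terms in the Keller–Rubinow slender-body
integrand cancel to give a bounded integrand. -/
theorem keller_rubinow_integrand_bounded
    (γ f : ℝ → EuclideanSpace ℝ (Fin 3)) (K : NNReal) (c : ℝ)
    (hγper : Function.Periodic γ 1)
    (hγC2 : ContDiff ℝ 2 γ)
    (hunit : ∀ s : ℝ, ‖deriv γ s‖ = 1)
    (hc : 0 < c)
    (hchord : ∀ s t : ℝ, c * |Real.sin (π * (s - t))| ≤ ‖γ s - γ t‖)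
    (hfper : Function.Periodic f 1)
    (hflip : LipschitzWith K f) :
    ∃ M : ℝ, 0 < M ∧ ∀ s t : ℝ, (∀ n : ℤ, s - t ≠ (n : ℝ)) →
      ‖(‖γ s - γ t‖)⁻¹ • f t
          + (⟪γ s - γ t, f t⟫ / ‖γ s - γ t‖ ^ 3) • (γ s - γ t)
          - (π / |Real.sin (π * (s - t))|) •
              (f s + ⟪deriv γ s, f s⟫ • deriv γ s)‖ ≤ M := by
  obtain ⟨L, hL⟩ := hγper.deriv.exists_lipschitzWith one_ne_zero (hγC2.deriv' (n := 1))
  obtain ⟨F, hF⟩ := ((hfper.comp norm).compact_of_continuous one_ne_zero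
    hflip.continuous.norm).bddAbove
  have hF₀ : 0 ≤ F := (norm_nonneg _).trans (hF ⟨0, rfl⟩)
  refine ⟨K / c + 3 * L * F / (2 * c ^ 2) + 2 * (π ^ 3 / 24) * F + 1, by positivity,
    fun s t hst => ?_⟩
  set n := round (s - t)
  have hne : s - (t + n) ≠ 0 := fun h => hst n (by linarith)
  have hhalf : |s - (t + n)| ≤ 1 / 2 := by rw [← sub_sub]; exact abs_sub_round (s - t)
  change ‖kellerRubinowIntegrand γ f s t‖ ≤ _
  rw [← kellerRubinowIntegrand_add_int hγper hfper s t n]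
  have := norm_kellerRubinowIntegrand_le (hγC2.differentiable two_ne_zero) hunit hL hc
    (hchord s (t + n)) hflip (hF ⟨s, rfl⟩) hne hhalf
  linarith
end

section
/- Define the planar curve γ : ℝ → ℝ² by γ(s) = (3/4 + (1/4)·cos(4s))^(−1/4) · (cos s, sin s), which parameterizes the boundary of the unit ball of the 4-norm in the plane (the curve x⁴ + y⁴ = 1), using the identity cos⁴ s + sin⁴ s = 3/4 + (1/4)cos(4s). Then γ'(0) = (0,1) ≠ 0 while γ''(0) = (0,0). Hence the derivative of the unit tangent vector vanishes at s = 0 and the Frenet normal T'/‖T'‖ is undefined there. -/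
/-!
In polar form `γ(s) = r(s) (cos s, sin s)` the acceleration is
`(r'' - r) (cos s, sin s) + 2 r' (-sin s, cos s)`. For `r = (cos⁴ s + sin⁴ s)^(-1/4)` one has
`r(0) = 1`, `r'(0) = 0` and `r''(0) = 1`, so the velocity at `0` is `(0, 1)` and the two
components of the acceleration cancel.
-/

open Real

section PolarCurve

variable {r r' : ℝ → ℝ}

theorem hasDerivAt_cos_sin (s : ℝ) :
    HasDerivAt (fun t => (cos t, sin t)) (-sin s, cos s) s :=
  (hasDerivAt_cos s).prodMk (hasDerivAt_sin s)

theorem HasDerivAt.smul_cos_sin {v s : ℝ} (hr : HasDerivAt r v s) :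
    HasDerivAt (fun t => r t • (Real.cos t, Real.sin t))
      (v • (Real.cos s, Real.sin s) + r s • (-Real.sin s, Real.cos s)) s :=
  (hr.smul (hasDerivAt_cos_sin s)).congr_deriv (add_comm _ _)

theorem deriv_smul_cos_sin (hr : ∀ s, HasDerivAt r (r' s) s) :
    deriv (fun t => r t • (cos t, sin t)) =
      fun s => r' s • (cos s, sin s) + r s • (-sin s, cos s) :=
  funext fun s => (hr s).smul_cos_sin.deriv

theorem hasDerivAt_deriv_smul_cos_sin (hr : ∀ s, HasDerivAt r (r' s) s) {a s : ℝ}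
    (hr' : HasDerivAt r' a s) :
    HasDerivAt (deriv fun t => r t • (cos t, sin t))
      ((a - r s) • (cos s, sin s) + (2 * r' s) • (-sin s, cos s)) s := by
  have hnormal : HasDerivAt (fun t => (-sin t, cos t)) (-cos s, -sin s) s :=
    (hasDerivAt_sin s).neg.prodMk (hasDerivAt_cos s)
  rw [deriv_smul_cos_sin hr]
  refine (hr'.smul_cos_sin.add ((hr s).smul hnormal)).congr_deriv ?_
  ext <;> simp only [Prod.fst_add, Prod.snd_add, Prod.smul_fst, Prod.smul_snd, smul_eq_mul] <;>
    ring

end PolarCurve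

theorem cos_pow_four_add_sin_pow_four (x : ℝ) :
    cos x ^ 4 + sin x ^ 4 = 3 / 4 + 1 / 4 * cos (4 * x) := by
  rw [show 4 * x = 2 * (2 * x) by ring, cos_two_mul, cos_two_mul]
  linear_combination (sin x ^ 2 + 1 - cos x ^ 2) * sin_sq_add_cos_sq x

noncomputable def cosSinQuartic (s : ℝ) : ℝ := 3 / 4 + 1 / 4 * cos (4 * s)

noncomputable def fourNormRadius (s : ℝ) : ℝ := cosSinQuartic s ^ (-(1 / 4 : ℝ))

noncomputable def fourNormRadiusDeriv (s : ℝ) : ℝ :=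
  sin (4 * s) / 4 * cosSinQuartic s ^ (-(5 / 4 : ℝ))

theorem cosSinQuartic_pos (s : ℝ) : 0 < cosSinQuartic s := by
  have := neg_one_le_cos (4 * s)
  unfold cosSinQuartic
  linarith

theorem cosSinQuartic_zero : cosSinQuartic 0 = 1 := by
  norm_num [cosSinQuartic]

theorem hasDerivAt_cosSinQuartic (s : ℝ) : HasDerivAt cosSinQuartic (-sin (4 * s)) s := by
  have h := (((hasDerivAt_id s).const_mul 4).cos.const_mul (1 / 4)).const_add (3 / 4)
  exact h.congr_deriv (by simp only [id]; ring)

theorem hasDerivAt_fourNormRadius (s : ℝ) :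
    HasDerivAt fourNormRadius (fourNormRadiusDeriv s) s := by
  refine ((hasDerivAt_cosSinQuartic s).rpow_const (Or.inl (cosSinQuartic_pos s).ne')).congr_deriv ?_
  rw [fourNormRadiusDeriv, show -(1 / 4 : ℝ) - 1 = -(5 / 4) by norm_num]
  ring

theorem hasDerivAt_fourNormRadiusDeriv_zero : HasDerivAt fourNormRadiusDeriv 1 0 := by
  have hsin := ((hasDerivAt_id (0 : ℝ)).const_mul 4).sin.div_const 4
  have hpow := (hasDerivAt_cosSinQuartic 0).rpow_const (p := -(5 / 4 : ℝ))
    (Or.inl (cosSinQuartic_pos 0).ne')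
  exact (hsin.mul hpow).congr_deriv (by simp [cosSinQuartic_zero])

theorem fourNormRadius_zero : fourNormRadius 0 = 1 := by
  rw [fourNormRadius, cosSinQuartic_zero, one_rpow]

theorem fourNormRadiusDeriv_zero : fourNormRadiusDeriv 0 = 0 := by
  simp [fourNormRadiusDeriv]

theorem fourNormRadius_mul_cos_pow_four_add_mul_sin_pow_four (s : ℝ) :
    (fourNormRadius s * cos s) ^ 4 + (fourNormRadius s * sin s) ^ 4 = 1 := by
  have hb := cosSinQuartic_pos s
  have hr4 : fourNormRadius s ^ 4 = (cosSinQuartic s)⁻¹ := by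
    rw [fourNormRadius, ← rpow_natCast, ← rpow_mul hb.le]
    norm_num [rpow_neg_one]
  calc (fourNormRadius s * cos s) ^ 4 + (fourNormRadius s * sin s) ^ 4
      = fourNormRadius s ^ 4 * (cos s ^ 4 + sin s ^ 4) := by ring
    _ = 1 := by rw [hr4, cos_pow_four_add_sin_pow_four, ← cosSinQuartic, inv_mul_cancel₀ hb.ne']

/-- For the parameterization `γ(s) = (3/4 + (1/4)cos 4s)^(-1/4) (cos s, sin s)` of the
boundary of the unit ball of the 4-norm in the plane (the curve `x⁴ + y⁴ = 1`),
the velocity `γ'(0) = (0,1)` is nonzero while the acceleration `γ''(0) = (0,0)`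
vanishes; hence the Frenet normal `T'/‖T'‖` is undefined at `s = 0`. -/
theorem frenet_normal_fails_for_four_norm_ball
    (γ : ℝ → ℝ × ℝ)
    (hγ : ∀ s : ℝ, γ s =
      ((3 / 4 + (1 / 4) * Real.cos (4 * s)) ^ (-(1 / 4 : ℝ))) •
        (Real.cos s, Real.sin s)) :
    (∀ s : ℝ, (γ s).1 ^ 4 + (γ s).2 ^ 4 = 1) ∧
      deriv γ 0 = (0, 1) ∧ ((0, 1) : ℝ × ℝ) ≠ 0 ∧
      deriv (deriv γ) 0 = (0, 0) := by
  have hγr : γ = fun s => fourNormRadius s • (cos s, sin s) := funext hγ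
  have hacc := hasDerivAt_deriv_smul_cos_sin hasDerivAt_fourNormRadius
    hasDerivAt_fourNormRadiusDeriv_zero
  refine ⟨fun s => ?_, ?_, by simp, ?_⟩
  · simpa [hγr] using fourNormRadius_mul_cos_pow_four_add_mul_sin_pow_four s
  · rw [hγr, deriv_smul_cos_sin hasDerivAt_fourNormRadius]
    simp [fourNormRadius_zero, fourNormRadiusDeriv_zero]
  · rw [hγr, hacc.deriv]
    simp [fourNormRadius_zero, fourNormRadiusDeriv_zero]
    rfl
end

section
/- Let s_l < s_r be real numbers and let h_l, h_r > 0 with h_l ≠ h_r. Define C = log(h_r/h_l), A = (s_r·h_l − s_l·h_r)/(h_l − h_r), B = (s_l − s_r)·h_l/(h_l − h_r), and let L : ℝ → ℝ be the affine function with L(s_l) = h_l and L(s_r) = h_r, i.e. L(s) = h_l + (s − s_l)·(h_r − h_l)/(s_r − s_l). Then the function s(t) = A + B·e^{C·t} satisfies s(0) = s_l, s(1) = s_r, and the first-order differential equation s'(t) = λ·L(s(t)) for all t, where λ = C·(s_r − s_l)/(h_r − h_l) is a constant. That is, s(t) solves the boundary value problem in which ds/dt is proportional to the linear interpolant of h along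 the interval, with the proportionality constant determined as part of the solution. -/
/-!
The interpolant `L` is affine with root `A`, so `λ L(s) = C (s - A)` and the differential equation
becomes the linear equation `s' = C (s - A)`, solved by `A + B e^{C t}`. The constants are forced by
the boundary values: `A + B = s_l`, and `A + B e^C = s_r` because `e^C = h_r / h_l = L(s_r) / L(s_l)`.
-/

open Real

theorem hasDerivAt_const_add_mul_exp (A B C t : ℝ) :
    HasDerivAt (fun t' => A + B * exp (C * t')) (C * (A + B * exp (C * t) - A)) t := by
  refine ((((hasDerivAt_id t).const_mul C).exp.const_mul B).const_add A).congr_deriv ?_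
  simp only [id_eq]
  ring

theorem linear_interp_eq_slope_mul_sub_root {s_l s_r h_l h_r : ℝ} (hs : s_l ≠ s_r)
    (hh : h_l ≠ h_r) (s : ℝ) :
    h_l + (s - s_l) * (h_r - h_l) / (s_r - s_l) =
      (h_r - h_l) / (s_r - s_l) * (s - (s_r * h_l - s_l * h_r) / (h_l - h_r)) := by
  have hs' : s_r - s_l ≠ 0 := sub_ne_zero.mpr hs.symm
  have hh' : h_l - h_r ≠ 0 := sub_ne_zero.mpr hh
  field_simp
  ring

/-- The exponential map `s(t) = A + B e^{Ct}` solves the boundary value problem in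
which `ds/dt` is proportional to the linear interpolant `L` of the endpoint
distances `h_l`, `h_r`, with proportionality constant `λ = C (s_r - s_l)/(h_r - h_l)`. -/
theorem exponential_substitution_solves_bvp
    (s_l s_r h_l h_r A B C lam : ℝ) (L : ℝ → ℝ)
    (hs : s_l < s_r) (hl : 0 < h_l) (hr : 0 < h_r) (hne : h_l ≠ h_r)
    (hC : C = Real.log (h_r / h_l))
    (hA : A = (s_r * h_l - s_l * h_r) / (h_l - h_r))
    (hB : B = (s_l - s_r) * h_l / (h_l - h_r))
    (hL : ∀ s : ℝ, L s = h_l + (s - s_l) * (h_r - h_l) / (s_r - s_l))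
    (hlam : lam = C * (s_r - s_l) / (h_r - h_l)) :
    A + B * Real.exp (C * 0) = s_l ∧ A + B * Real.exp (C * 1) = s_r ∧
      ∀ t : ℝ, HasDerivAt (fun t' => A + B * Real.exp (C * t'))
        (lam * L (A + B * Real.exp (C * t))) t := by
  have hh : h_l - h_r ≠ 0 := sub_ne_zero.mpr hne
  have hh' : h_r - h_l ≠ 0 := sub_ne_zero.mpr hne.symm
  have hs' : s_r - s_l ≠ 0 := sub_ne_zero.mpr hs.ne'
  have hexpC : exp C = h_r / h_l := by rw [hC, exp_log (div_pos hr hl)]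
  have hlamL : ∀ s, lam * L s = C * (s - A) := fun s => by
    rw [hL, linear_interp_eq_slope_mul_sub_root hs.ne hne, ← hA, hlam]
    field_simp
  refine ⟨?_, ?_, fun t => (hasDerivAt_const_add_mul_exp A B C t).congr_deriv (hlamL _).symm⟩
  · rw [mul_zero, exp_zero, hA, hB]
    field_simp
    ring
  · rw [mul_one, hexpC, hA, hB]
    field_simp
    ring
end
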